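/- Let C be an admissible column of type B of height h(C) ≤ n, and define lC-hat = lC ∪ {x̄ : x unbarred, x ∉ |C|} and rC-hat = rC ∪ {x : x unbarred, x ∉ |C|}, where |C| = {x ⪯ n : x ∈ lC or x̄ ∈ lC}. Then lC-hat and rC-hat are spin columns of height n (strictly increasing, containing no pair (z, z̄)). -/

import Mathlib

/-- Rank of a letter of the alphabet `B_n = {1 ≺ ⋯ ≺ n ≺ 0 ≺ n̄ ≺ ⋯ ≺ 1̄}`,
where the letter `i` is encoded by the integer `i`, `0` by `0` and `ī` by `-i`. -/
def rankB (n : ℕ) (v : ℤ) : ℤ :=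
  if 0 < v then v else if v = 0 then (n : ℤ) + 1 else 2 * (n : ℤ) + 2 + v

/-- `C` is a column of type `B`: letters of `B_n`, strictly increasing from top to
bottom except that the letter `0` may repeat. -/
def IsColB (n : ℕ) (C : List ℤ) : Prop :=
  (∀ v ∈ C, v.natAbs ≤ n) ∧
  C.Chain' (fun a b => rankB n a < rankB n b ∨ (a = 0 ∧ b = 0))

/-- Rank of a letter of `D_n`; the letters `n` and `n̄` share the same rank
(they are incomparable). -/
def rankD (n : ℕ) (v : ℤ) : ℤ :=
  if 0 < v then v else 2 * (n : ℤ) + v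

/-- `C` is a column of type `D`: letters of `D_n` with `x_{i+1} ⋠ x_i`. -/
def IsColD (n : ℕ) (C : List ℤ) : Prop :=
  (∀ v ∈ C, 1 ≤ v.natAbs ∧ v.natAbs ≤ n) ∧
  C.Chain' (fun a b => rankD n a ≤ rankD n b ∧ a ≠ b)

/-- `N(z)`: the number of letters `x` of `C` with `x ⪯ z` or `x ⪰ z̄`,
for an unbarred letter `z`; these are exactly the nonzero letters of absolute
value at most `z`. -/
def Ncount (n : ℕ) (C : List ℤ) (z : ℤ) : ℕ :=
  (C.filter (fun v => decide (v ≠ 0 ∧ (v.natAbs : ℤ) ≤ z))).length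

/-- Kashiwara–Nakashima admissibility: height at most `n` and `N(z) ≤ z` for
every pair `(z, z̄)` with `z ⪯ n` unbarred occurring in `C`. -/
def Admissible (n : ℕ) (C : List ℤ) : Prop :=
  C.length ≤ n ∧
  ∀ z : ℤ, 1 ≤ z → z ≤ (n : ℤ) → z ∈ C → -z ∈ C → (Ncount n C z : ℤ) ≤ z
/-- The multiset `I_C`: one letter `0` for each occurrence of `0` in `C` (listed
first), followed by the unbarred letters `z` with `(z, z̄)` occurring in `C`, in
decreasing order. -/
def IC (n : ℕ) (C : List ℤ) : List ℤ :=
  List.replicate (C.count 0) 0 ++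
    ((List.range n).reverse.filterMap fun k =>
      if ((k + 1 : ℤ) ∈ C ∧ (-((k : ℤ) + 1)) ∈ C) then some ((k : ℤ) + 1) else none)

/-- `GreedyJ n C I J bound` holds when `J` is the greedy choice of substitute
letters for `I`: each `t_i` is the greatest unbarred letter with
`t_i ≺ min (t_{i-1}, z_i)` such that neither `t_i` nor `t̄_i` occurs in `C`
(the letter `0` is treated as larger than every unbarred letter). -/
def GreedyJ (n : ℕ) (C : List ℤ) : List ℤ → List ℤ → ℤ → Prop
  | [], [], _ => True
  | z :: I, t :: J, bound =>
      (1 ≤ t ∧ t < min bound (if z = 0 then (n : ℤ) + 1 else z) ∧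
        t ∉ C ∧ -t ∉ C ∧
        (∀ t' : ℤ, t < t' → t' < min bound (if z = 0 then (n : ℤ) + 1 else z) →
          t' ∈ C ∨ -t' ∈ C)) ∧
      GreedyJ n C I J t
  | _, _, _ => False

/-- A column of type `B` can be split when the greedy choice of the `t_i`
succeeds. -/
def CanSplitB (n : ℕ) (C : List ℤ) : Prop :=
  ∃ J : List ℤ, GreedyJ n C (IC n C) J ((n : ℤ) + 1)

/-- The type-`B` column `Ĉ` associated to a column of type `D`: each factor
`n̄ n` is replaced by `0 0`. -/
def hatD (n : ℕ) : List ℤ → List ℤ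
  | [] => []
  | [a] => [a]
  | a :: b :: rest =>
      if a = -(n : ℤ) ∧ b = (n : ℤ) then 0 :: 0 :: hatD n rest
      else a :: hatD n (b :: rest)

/-- `(lC, rC)` is the split pair of the column `C`: in `rC` each `z̄_i` is
changed into `t̄_i` and in `lC` each `z_i` is changed into `t_i`, reordering
afterwards. -/
def SplitPair (n : ℕ) (C l r : List ℤ) : Prop :=
  ∃ J : List ℤ, GreedyJ n C (IC n C) J ((n : ℤ) + 1) ∧
    l.Chain' (fun a b => rankB n a < rankB n b) ∧
    (l : Multiset ℤ) + (IC n C : Multiset ℤ) = (C : Multiset ℤ) + (J : Multiset ℤ) ∧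
    r.Chain' (fun a b => rankB n a < rankB n b) ∧
    (r : Multiset ℤ) + (((IC n C).map fun z => -z : List ℤ) : Multiset ℤ)
      = (C : Multiset ℤ) + (((J.map fun z => -z : List ℤ)) : Multiset ℤ)
/-- The set of spin columns of height `n`: subsets of
`{1,…,n, n̄,…,1̄}` containing exactly one of `k`, `k̄` for each `k`
(`k̄` is encoded by `-k`). -/
noncomputable def SpinCols (n : ℕ) : Finset (Finset ℤ) :=
  ((Finset.Icc (-(n : ℤ)) (n : ℤ)).powerset).filter
    (fun s => (0 : ℤ) ∉ s ∧ ∀ k ∈ Finset.Icc (1 : ℤ) (n : ℤ), Xor (k ∈ s) (-k ∈ s))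

/-- `f̃_i` on spin columns, type `B`: `f̃_n` turns `n` into `n̄`; for `i < n`,
`f̃_i` turns the pair `(i, i+1bar)` into `(i+1, ībar)`. -/
def fS (n i : ℕ) (C : Finset ℤ) : Option (Finset ℤ) :=
  if i < n then
    if (i : ℤ) ∈ C ∧ (-((i : ℤ) + 1)) ∈ C then
      some (insert ((i : ℤ) + 1) (insert (-(i : ℤ))
        ((C.erase (i : ℤ)).erase (-((i : ℤ) + 1)))))
    else none
  else
    if (n : ℤ) ∈ C then some (insert (-(n : ℤ)) (C.erase (n : ℤ))) else none

/-- `ẽ_i` on spin columns, type `B`. -/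
def eS (n i : ℕ) (C : Finset ℤ) : Option (Finset ℤ) :=
  if i < n then
    if ((i : ℤ) + 1) ∈ C ∧ (-(i : ℤ)) ∈ C then
      some (insert (i : ℤ) (insert (-((i : ℤ) + 1))
        ((C.erase ((i : ℤ) + 1)).erase (-(i : ℤ)))))
    else none
  else
    if (-(n : ℤ)) ∈ C then some (insert (n : ℤ) (C.erase (-(n : ℤ)))) else none

/-- `ε_i` on spin columns (all strings have length at most one). -/
def epsS (n i : ℕ) (C : Finset ℤ) : ℕ := if (eS n i C).isSome then 1 else 0

/-- `φ_i` on spin columns. -/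
def phiS (n i : ℕ) (C : Finset ℤ) : ℕ := if (fS n i C).isSome then 1 else 0

-- helper lemmas

lemma greedy_mem {n : ℕ} {C : List ℤ} :
    ∀ {I J : List ℤ} {b : ℤ}, GreedyJ n C I J b → b ≤ (n : ℤ) + 1 →
      ∀ t ∈ J, 1 ≤ t ∧ t ≤ (n : ℤ) ∧ t ∉ C ∧ -t ∉ C := by
  intro I
  induction I with
  | nil => intro J b h hb t ht; cases J with
    | nil => simp at ht
    | cons a J => exact absurd h (by simp [GreedyJ])
  | cons z I ih =>
    intro J b h hb t ht
    cases J with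
    | nil => simp at ht
    | cons t0 J =>
      obtain ⟨⟨h1, h2, h3, h4, _⟩, hrec⟩ := h
      have ht0n : t0 ≤ (n : ℤ) := by
        have := lt_of_lt_of_le h2 (min_le_left _ _); omega
      rcases List.mem_cons.1 ht with rfl | ht
      · exact ⟨h1, ht0n, h3, h4⟩
      · exact ih hrec (by omega) t ht

lemma pairwise_count_le_one {R : ℤ → ℤ → Prop} {k : ℤ} (hk : ¬ R k k) :
    ∀ {C : List ℤ}, C.Pairwise R → C.count k ≤ 1 := by
  intro C
  induction C with
  | nil => simp
  | cons a tl ih =>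
    intro h
    rw [List.pairwise_cons] at h
    by_cases hak : a = k
    · have hkn : k ∉ tl := fun hm => hk (hak ▸ h.1 k hm)
      simp [List.count_cons, hak, List.count_eq_zero_of_not_mem hkn]
    · simpa [List.count_cons, hak] using ih h.2

lemma colB_count_le_one {n : ℕ} {C : List ℤ} (h : IsColB n C) {k : ℤ} (hk : k ≠ 0) :
    C.count k ≤ 1 := by
  have : IsTrans ℤ (fun a b => rankB n a < rankB n b ∨ (a = 0 ∧ b = 0)) := by
    constructor
    intro a b c hab hbc
    rcases hab with hab | ⟨ha0, hb0⟩
    · rcases hbc with hbc | ⟨hb0, hc0⟩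
      · exact Or.inl (hab.trans hbc)
      · exact Or.inl (by rw [hc0, ← hb0]; exact hab)
    · rcases hbc with hbc | ⟨hb0', hc0⟩
      · exact Or.inl (by rw [ha0, ← hb0]; exact hbc)
      · exact Or.inr ⟨ha0, hc0⟩
  have hp := List.isChain_iff_pairwise.1 h.2
  exact pairwise_count_le_one (by simp [hk]) hp

section ICfacts
variable (n : ℕ) (C : List ℤ)

def fIC : ℤ → Option ℤ := fun k =>
  if ((k + 1 : ℤ) ∈ C ∧ (-(k + 1)) ∈ C) then some (k + 1) else none

def LIC (n : ℕ) : List ℤ := (List.range n).reverse.map (fun a : ℕ => (a : ℤ))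

lemma IC_eq : IC n C = List.replicate (C.count 0) 0 ++ (LIC n).filterMap (fIC C) := by
  unfold IC fIC LIC
  rw [List.map_eq_flatMap]
  rfl

lemma fIC_some {a b : ℤ} (h : fIC C a = some b) :
    b = a + 1 ∧ (a + 1) ∈ C ∧ (-(a + 1)) ∈ C := by
  unfold fIC at h
  by_cases hc : ((a + 1 : ℤ) ∈ C ∧ (-(a + 1)) ∈ C)
  · rw [if_pos hc] at h
    exact ⟨(Option.some.inj h).symm, hc⟩
  · rw [if_neg hc] at h; cases h

lemma LIC_nonneg {a : ℤ} (h : a ∈ LIC n) : 0 ≤ a ∧ a < (n : ℤ) := by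
  obtain ⟨j, hj, rfl⟩ := List.mem_map.1 h
  rw [List.mem_reverse, List.mem_range] at hj
  omega

lemma IC_count_zero : (IC n C).count 0 = C.count 0 := by
  have hnm : (0 : ℤ) ∉ (LIC n).filterMap (fIC C) := by
    intro hm
    obtain ⟨a, ham, ha⟩ := List.mem_filterMap.1 hm
    have h1 := (fIC_some C ha).1
    have h2 := LIC_nonneg n ham
    omega
  rw [IC_eq, List.count_append, List.count_eq_zero_of_not_mem hnm,
    List.count_replicate]
  simp

lemma IC_count_neg {k : ℤ} (hk : k < 0) : (IC n C).count k = 0 := by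
  have hnm : k ∉ (LIC n).filterMap (fIC C) := by
    intro hm
    obtain ⟨a, ham, ha⟩ := List.mem_filterMap.1 hm
    have h1 := (fIC_some C ha).1
    have h2 := LIC_nonneg n ham
    omega
  rw [IC_eq, List.count_append, List.count_eq_zero_of_not_mem hnm,
    List.count_replicate]
  have : ¬ ((0:ℤ) = k) := by omega
  simp [this]

lemma IC_count_pos {k : ℤ} (hk1 : 1 ≤ k) (hkn : k ≤ (n : ℤ)) :
    (IC n C).count k = if k ∈ C ∧ -k ∈ C then 1 else 0 := by
  have hnd : ((LIC n).filterMap (fIC C)).Nodup := by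
    refine List.Nodup.filterMap ?_ ?_
    · intro a a' b hb hb'
      have h1 := (fIC_some C (Option.mem_def.1 hb)).1
      have h2 := (fIC_some C (Option.mem_def.1 hb')).1
      omega
    · exact (List.nodup_reverse.2 (List.nodup_range (n := n))).map
        (fun a b hab => by exact_mod_cast hab)
  have hmem : k ∈ (LIC n).filterMap (fIC C) ↔ (k ∈ C ∧ -k ∈ C) := by
    rw [List.mem_filterMap]
    constructor
    · rintro ⟨a, _, ha⟩
      obtain ⟨hb, h1, h2⟩ := fIC_some C ha
      subst hb
      exact ⟨h1, h2⟩
    · rintro ⟨h1, h2⟩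
      refine ⟨k - 1, ?_, ?_⟩
      · unfold LIC
        rw [List.mem_map]
        refine ⟨(k - 1).toNat, ?_, by omega⟩
        rw [List.mem_reverse, List.mem_range]
        omega
      · have hc : k - 1 + 1 = k := by omega
        unfold fIC
        rw [hc, if_pos ⟨h1, h2⟩]
  have hne : ¬ ((0:ℤ) = k) := by omega
  rw [IC_eq, List.count_append, List.count_replicate]
  by_cases h : k ∈ C ∧ -k ∈ C
  · rw [if_pos h, List.count_eq_one_of_mem hnd (hmem.2 h)]
    simp [hne]
  · rw [if_neg h, List.count_eq_zero_of_not_mem (fun hm => h (hmem.1 hm))]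
    simp [hne]

end ICfacts

lemma count_map_neg (L : List ℤ) (k : ℤ) :
    (L.map fun z => -z).count k = L.count (-k) := by
  have := List.count_map_of_injective L (fun z : ℤ => -z)
    (fun a b h => by simpa using h) (-k)
  simpa using this

lemma key_mem {n : ℕ} {C l r J : List ℤ} (hcol : IsColB n C)
    (hJmem : ∀ t ∈ J, 1 ≤ t ∧ t ≤ (n : ℤ) ∧ t ∉ C ∧ -t ∉ C)
    (hcl : ∀ k : ℤ, l.count k + (IC n C).count k = C.count k + J.count k)
    (hcr : ∀ k : ℤ, r.count k + (IC n C).count (-k) = C.count k + J.count (-k))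
    {k : ℤ} (hk1 : 1 ≤ k) (hkn : k ≤ (n : ℤ)) :
    (k ∈ l ↔ ((k ∈ C ∧ -k ∉ C) ∨ k ∈ J)) ∧ (-k ∈ l ↔ -k ∈ C) ∧
    (k ∈ r ↔ k ∈ C) ∧ (-k ∈ r ↔ ((-k ∈ C ∧ k ∉ C) ∨ k ∈ J)) := by
  have e1 := hcl k
  have e2 := hcl (-k)
  have e3 := hcr k
  have e4 := hcr (-k)
  rw [IC_count_pos n C hk1 hkn] at e1
  rw [IC_count_neg n C (by omega : -k < 0)] at e2
  rw [IC_count_neg n C (by omega : -k < 0)] at e3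
  rw [neg_neg, IC_count_pos n C hk1 hkn] at e4
  have hJneg : J.count (-k) = 0 :=
    List.count_eq_zero_of_not_mem (fun h => by have := (hJmem _ h).1; omega)
  rw [hJneg] at e2 e3
  have hca := colB_count_le_one hcol (by omega : k ≠ 0)
  have hcb := colB_count_le_one hcol (by omega : -k ≠ 0)
  have fl1 : k ∈ l ↔ 0 < l.count k := List.count_pos_iff.symm
  have fl2 : -k ∈ l ↔ 0 < l.count (-k) := List.count_pos_iff.symm
  have fr1 : k ∈ r ↔ 0 < r.count k := List.count_pos_iff.symm
  have fr2 : -k ∈ r ↔ 0 < r.count (-k) := List.count_pos_iff.symm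
  have fc1 : k ∈ C ↔ 0 < C.count k := List.count_pos_iff.symm
  have fc2 : -k ∈ C ↔ 0 < C.count (-k) := List.count_pos_iff.symm
  have fj1 : k ∈ J ↔ 0 < J.count k := List.count_pos_iff.symm
  rw [fl1, fl2, fr1, fr2, fc1, fc2, fj1]
  by_cases hab : k ∈ C ∧ -k ∈ C
  · rw [if_pos hab] at e1 e4
    have ha1 : 0 < C.count k := List.count_pos_iff.2 hab.1
    have hb1 : 0 < C.count (-k) := List.count_pos_iff.2 hab.2
    have hj0 : J.count k = 0 :=
      List.count_eq_zero_of_not_mem (fun h => (hJmem _ h).2.2.1 hab.1)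
    omega
  · rw [if_neg hab] at e1 e4
    by_cases hj : k ∈ J
    · have hj1 : 0 < J.count k := List.count_pos_iff.2 hj
      have hnc := (hJmem _ hj).2.2
      have ha0 : C.count k = 0 := List.count_eq_zero_of_not_mem hnc.1
      have hb0 : C.count (-k) = 0 := List.count_eq_zero_of_not_mem hnc.2
      omega
    · have hj0 : J.count k = 0 := List.count_eq_zero_of_not_mem hj
      by_cases ha : k ∈ C
      · have ha1 : 0 < C.count k := List.count_pos_iff.2 ha
        have hb0 : C.count (-k) = 0 :=
          List.count_eq_zero_of_not_mem (fun h => hab ⟨ha, h⟩)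
        omega
      · have ha0 : C.count k = 0 := List.count_eq_zero_of_not_mem ha
        by_cases hb : -k ∈ C
        · have hb1 : 0 < C.count (-k) := List.count_pos_iff.2 hb
          omega
        · have hb0 : C.count (-k) = 0 := List.count_eq_zero_of_not_mem hb
          omega

/-- Let `C` be an admissible column of type `B` with split
pair `(lC, rC)` and let `|C| = {x ⪯ n : x ∈ lC or x̄ ∈ lC}`.  Then the sets
`lC ∪ {x̄ : x ∉ |C|}` and `rC ∪ {x : x ∉ |C|}` are spin columns of height
`n`. -/
theorem stmt12 (n : ℕ) (C l r : List ℤ)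
    (hcol : IsColB n C) (hadm : Admissible n C)
    (hsplit : SplitPair n C l r) :
    (l.toFinset ∪ ((Finset.Icc (1 : ℤ) (n : ℤ)).filter
        (fun x => ¬(x ∈ l ∨ -x ∈ l))).image (fun x => -x)) ∈ SpinCols n ∧
    (r.toFinset ∪ (Finset.Icc (1 : ℤ) (n : ℤ)).filter
        (fun x => ¬(x ∈ l ∨ -x ∈ l))) ∈ SpinCols n := by
  obtain ⟨J, hJ, _, hlmul, _, hrmul⟩ := hsplit
  have hJmem : ∀ t ∈ J, 1 ≤ t ∧ t ≤ (n : ℤ) ∧ t ∉ C ∧ -t ∉ C :=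
    greedy_mem hJ le_rfl
  have hcl : ∀ k : ℤ, l.count k + (IC n C).count k = C.count k + J.count k := by
    intro k
    have h := congrArg (Multiset.count k) hlmul
    simpa [Multiset.coe_count] using h
  have hcr : ∀ k : ℤ, r.count k + (IC n C).count (-k)
      = C.count k + J.count (-k) := by
    intro k
    have h := congrArg (Multiset.count k) hrmul
    rw [Multiset.count_add, Multiset.count_add, Multiset.coe_count,
      Multiset.coe_count, Multiset.coe_count, Multiset.coe_count,
      count_map_neg, count_map_neg] at h
    exact h
  have hJ00 : J.count 0 = 0 :=
    List.count_eq_zero_of_not_mem (fun h => by have := (hJmem _ h).1; omega)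
  have h0l : (0 : ℤ) ∉ l := by
    have e := hcl 0
    rw [IC_count_zero, hJ00] at e
    intro hm
    have := List.count_pos_iff.2 hm
    omega
  have h0r : (0 : ℤ) ∉ r := by
    have e := hcr 0
    rw [neg_zero, IC_count_zero, hJ00] at e
    intro hm
    have := List.count_pos_iff.2 hm
    omega
  have hbl : ∀ v ∈ l, -(n : ℤ) ≤ v ∧ v ≤ (n : ℤ) := by
    intro v hv
    have e := hcl v
    have hp := List.count_pos_iff.2 hv
    have hor : 0 < C.count v ∨ 0 < J.count v := by omega
    rcases hor with h | h
    · have := hcol.1 v (List.count_pos_iff.1 h); omega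
    · have := hJmem v (List.count_pos_iff.1 h); omega
  have hbr : ∀ v ∈ r, -(n : ℤ) ≤ v ∧ v ≤ (n : ℤ) := by
    intro v hv
    have e := hcr v
    have hp := List.count_pos_iff.2 hv
    have hor : 0 < C.count v ∨ 0 < J.count (-v) := by omega
    rcases hor with h | h
    · have := hcol.1 v (List.count_pos_iff.1 h); omega
    · have := hJmem (-v) (List.count_pos_iff.1 h); omega
  constructor
  · rw [SpinCols, Finset.mem_filter, Finset.mem_powerset]
    refine ⟨?_, ?_, ?_⟩
    · intro v hv
      rw [Finset.mem_union] at hv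
      rw [Finset.mem_Icc]
      rcases hv with hv | hv
      · exact hbl v (List.mem_toFinset.1 hv)
      · obtain ⟨x, hx, rfl⟩ := Finset.mem_image.1 hv
        rw [Finset.mem_filter, Finset.mem_Icc] at hx
        omega
    · intro h0
      rw [Finset.mem_union] at h0
      rcases h0 with h0 | h0
      · exact h0l (List.mem_toFinset.1 h0)
      · obtain ⟨x, hx, hx0⟩ := Finset.mem_image.1 h0
        rw [Finset.mem_filter, Finset.mem_Icc] at hx
        omega
    · intro k hk
      rw [Finset.mem_Icc] at hk
      obtain ⟨K1, K2, K3, K4⟩ := key_mem hcol hJmem hcl hcr hk.1 hk.2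
      have hJC : k ∈ J → k ∉ C ∧ -k ∉ C := fun h => (hJmem k h).2.2
      have hm1 : ∀ v : ℤ, v ∈ ((Finset.Icc (1 : ℤ) (n : ℤ)).filter
          (fun x => ¬(x ∈ l ∨ -x ∈ l))).image (fun x => -x) ↔
          (1 ≤ -v ∧ -v ≤ (n : ℤ) ∧ ¬(-v ∈ l ∨ -(-v) ∈ l)) := by
        intro v
        rw [Finset.mem_image]
        constructor
        · rintro ⟨x, hx, rfl⟩
          rw [Finset.mem_filter, Finset.mem_Icc] at hx
          rw [neg_neg]
          exact ⟨hx.1.1, hx.1.2, hx.2⟩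
        · rintro ⟨h1, h2, h3⟩
          exact ⟨-v, Finset.mem_filter.2 ⟨Finset.mem_Icc.2 ⟨h1, h2⟩, h3⟩, neg_neg v⟩
      rw [Xor]
      rw [Finset.mem_union, Finset.mem_union, List.mem_toFinset,
        List.mem_toFinset, hm1, hm1]
      simp only [neg_neg]
      have hne : ¬ (1 ≤ -k) := by omega
      have hk1 := hk.1
      have hk2 := hk.2
      clear * - K1 K2 K3 K4 hJC hne hk1 hk2
      tauto
  · rw [SpinCols, Finset.mem_filter, Finset.mem_powerset]
    refine ⟨?_, ?_, ?_⟩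
    · intro v hv
      rw [Finset.mem_union] at hv
      rw [Finset.mem_Icc]
      rcases hv with hv | hv
      · exact hbr v (List.mem_toFinset.1 hv)
      · rw [Finset.mem_filter, Finset.mem_Icc] at hv
        omega
    · intro h0
      rw [Finset.mem_union] at h0
      rcases h0 with h0 | h0
      · exact h0r (List.mem_toFinset.1 h0)
      · rw [Finset.mem_filter, Finset.mem_Icc] at h0
        omega
    · intro k hk
      rw [Finset.mem_Icc] at hk
      obtain ⟨K1, K2, K3, K4⟩ := key_mem hcol hJmem hcl hcr hk.1 hk.2
      have hJC : k ∈ J → k ∉ C ∧ -k ∉ C := fun h => (hJmem k h).2.2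
      rw [Xor]
      rw [Finset.mem_union, Finset.mem_union, List.mem_toFinset,
        List.mem_toFinset, Finset.mem_filter, Finset.mem_filter,
        Finset.mem_Icc, Finset.mem_Icc]
      simp only [neg_neg]
      have hne : ¬ (1 ≤ -k) := by omega
      have hk1 := hk.1
      have hk2 := hk.2
      clear * - K1 K2 K3 K4 hJC hne hk1 hk2
      rw [K3, K4, K1, K2]
      by_cases hj : k ∈ J
      · have hab := hJC hj
        simp [hj, hab.1, hab.2, hne, hk1, hk2]
      · by_cases ha : k ∈ C <;> by_cases hb : -k ∈ C <;>
          simp [hj, ha, hb, hne, hk1, hk2]
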